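/- arXiv:math/0407149 — 3 statements merged into one kernel-verified Lean document; each statement's English description precedes it below -/
import Mathlib

section
/- Let $(A_n)_{n\ge0}$ be a nondecreasing sequence of nonnegative reals with $A_0=0$ that is eventually constant with value $A_\infty$. Then for every integer $p\ge2$, $A_\infty^p \le p\sum_{n=1}^\infty (A_\infty - A_n)(A_{n+1}^{p-1}-A_n^{p-1}) + p\,A_\infty A_1^{p-1}$. -/
lemma pow_sub_pow_le_aux (a b : ℝ) (ha : 0 ≤ a) (hab : a ≤ b) (m : ℕ) :
    b ^ (m + 1) - a ^ (m + 1) ≤ (m + 1 : ℝ) * b ^ m * (b - a) := by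
  rw [← geom_sum₂_mul b a (m + 1)]
  apply mul_le_mul_of_nonneg_right _ (by linarith)
  calc (∑ i ∈ Finset.range (m + 1), b ^ i * a ^ (m + 1 - 1 - i))
      ≤ ∑ i ∈ Finset.range (m + 1), b ^ m := by
        apply Finset.sum_le_sum
        intro i hi
        simp only [Finset.mem_range] at hi
        have hi' : i ≤ m := Nat.lt_succ_iff.mp hi
        calc b ^ i * a ^ (m + 1 - 1 - i) ≤ b ^ i * b ^ (m + 1 - 1 - i) := by
              apply mul_le_mul_of_nonneg_left (pow_le_pow_left₀ ha hab _)
                (pow_nonneg (le_trans ha hab) _)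
          _ = b ^ m := by rw [← pow_add]; congr 1; omega
    _ = (m + 1 : ℝ) * b ^ m := by
        rw [Finset.sum_const, Finset.card_range, nsmul_eq_mul]; push_cast; ring

lemma young_aux (a b : ℝ) (ha : 0 ≤ a) (hab : a ≤ b) (m : ℕ) :
    (m + 1 : ℝ) * (a * b ^ m) ≤ a ^ (m + 1) + (m : ℝ) * b ^ (m + 1) := by
  have h := pow_sub_pow_le_aux a b ha hab m
  have hb : b ^ (m + 1) = b ^ m * b := by ring
  nlinarith [h]

theorem stmt3 (A : ℕ → ℝ) (hmono : Monotone A) (hnn : ∀ n, 0 ≤ A n) (h0 : A 0 = 0)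
    (N : ℕ) (hN : ∀ n, N ≤ n → A n = A N) (p : ℕ) (hp : 2 ≤ p) :
    A N ^ p ≤
      p * (∑' n : ℕ, (A N - A (n + 1)) * (A (n + 2) ^ (p - 1) - A (n + 1) ^ (p - 1)))
        + p * A N * A 1 ^ (p - 1) := by
  obtain ⟨m, rfl⟩ : ∃ m, p = m + 1 := ⟨p - 1, by omega⟩
  have hm : 1 ≤ m := by omega
  simp only [Nat.add_sub_cancel]
  have hAN1 : A (N + 1) = A N := hN (N + 1) (Nat.le_succ N)
  -- tsum reduces to a finite sum
  have htsum : (∑' n : ℕ, (A N - A (n + 1)) * (A (n + 2) ^ m - A (n + 1) ^ m))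
      = ∑ n ∈ Finset.range N, (A N - A (n + 1)) * (A (n + 2) ^ m - A (n + 1) ^ m) := by
    apply tsum_eq_sum
    intro b hb
    have hb' : N ≤ b + 1 := by simp [Finset.mem_range] at hb; omega
    rw [hN (b + 1) hb', sub_self, zero_mul]
  rw [htsum]
  -- Abel summation
  have expand : ∑ n ∈ Finset.range N, (A N - A (n + 1)) * (A (n + 2) ^ m - A (n + 1) ^ m)
      = A N * (A (N + 1) ^ m - A 1 ^ m)
        - ∑ n ∈ Finset.range N, A (n + 1) * (A (n + 2) ^ m - A (n + 1) ^ m) := by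
    have e1 : ∀ n ∈ Finset.range N, (A N - A (n + 1)) * (A (n + 2) ^ m - A (n + 1) ^ m)
        = A N * (A (n + 2) ^ m - A (n + 1) ^ m)
          - A (n + 1) * (A (n + 2) ^ m - A (n + 1) ^ m) := fun n _ => by ring
    rw [Finset.sum_congr rfl e1, Finset.sum_sub_distrib, ← Finset.mul_sum,
      Finset.sum_range_sub (fun n => A (n + 1) ^ m) N]
  rw [expand]
  -- bound the remaining sum
  have key : ((m : ℝ) + 1) * ∑ n ∈ Finset.range N, A (n + 1) * (A (n + 2) ^ m - A (n + 1) ^ m)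
      ≤ (m : ℝ) * A N ^ (m + 1) := by
    rw [Finset.mul_sum]
    calc ∑ n ∈ Finset.range N, ((m : ℝ) + 1) * (A (n + 1) * (A (n + 2) ^ m - A (n + 1) ^ m))
        ≤ ∑ n ∈ Finset.range N, (m : ℝ) * (A (n + 2) ^ (m + 1) - A (n + 1) ^ (m + 1)) := by
          apply Finset.sum_le_sum
          intro n _
          have h := young_aux (A (n + 1)) (A (n + 2)) (hnn _) (hmono (by omega)) m
          have h2 : A (n + 1) ^ (m + 1) = A (n + 1) * A (n + 1) ^ m := by ring
          nlinarith [h, h2]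
      _ = (m : ℝ) * (A (N + 1) ^ (m + 1) - A 1 ^ (m + 1)) := by
          rw [← Finset.mul_sum, Finset.sum_range_sub (fun n => A (n + 1) ^ (m + 1)) N]
      _ ≤ (m : ℝ) * A N ^ (m + 1) := by
          rw [hAN1]
          have h1 : (0 : ℝ) ≤ A 1 ^ (m + 1) := pow_nonneg (hnn 1) _
          nlinarith [h1, (Nat.one_le_cast (α := ℝ)).mpr hm]
  rw [hAN1]
  push_cast
  have hANm : A N * A N ^ m = A N ^ (m + 1) := by ring
  nlinarith [key]
end

section
/- Let $X_n$ be a random walk on $\mathbb{Z}^2$ with i.i.d. increments. Suppose its transition probabilities satisfy $p(n,0,x)\le C/n$ for all $n\ge1,x$, and $|p(n,0,x)-p(n,0,y)|\le C|x-y|/n^{3/2}$ for all $n\ge1$ and $x,y\in\mathbb{Z}^2$. Then the potential kernel $G(x)=\sum_{n=1}^\infty[p(n,0,x)-p(n,0,e_1)]$ converges absolutely for every $x$, and $|G(x)|\le c(1+\log^+|x|)$ for some constant $c$. -/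
/-!
For `n ≤ |x|²` each term is at most `C / n`, since both probabilities lie in `[0, C / n]`, and
these terms add up to `C (1 + log |x|²)`. For `n > |x|²` the gradient bound gives terms
`C (|x| + 1) / n^{3/2}`, whose tail beyond `|x|²` is `O(C)` because
`n^{-3/2} ≤ 2 (n-1)^{-1/2} - 2 n^{-1/2}` telescopes.
-/

open MeasureTheory ProbabilityTheory

/-- Euclidean norm of a point of `ℤ × ℤ`. -/
noncomputable def znorm (x : ℤ × ℤ) : ℝ := Real.sqrt ((x.1 : ℝ) ^ 2 + (x.2 : ℝ) ^ 2)

open Real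

lemma znorm_eq_norm (x : ℤ × ℤ) : znorm x = ‖((x.1 : ℂ) + x.2 * Complex.I)‖ := by
  simp [znorm, Complex.norm_eq_sqrt_sq_add_sq]

lemma znorm_sub_le (x y : ℤ × ℤ) : znorm (x - y) ≤ znorm x + znorm y := by
  simp only [znorm_eq_norm, Prod.fst_sub, Prod.snd_sub, Int.cast_sub]
  calc _ = ‖((x.1 : ℂ) + x.2 * Complex.I) - ((y.1 : ℂ) + y.2 * Complex.I)‖ := by ring_nf
    _ ≤ _ := norm_sub_le _ _

lemma znorm_one_zero : znorm (1, 0) = 1 := by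
  simp [znorm]

lemma summable_one_div_add_rpow {a s : ℝ} (ha : 0 ≤ a) (hs : 1 < s) :
    Summable fun n : ℕ => 1 / ((n : ℝ) + a) ^ s := by
  refine ((Real.summable_one_div_nat_add_rpow a s).mpr hs).congr fun n => ?_
  rw [abs_of_nonneg (by positivity)]

lemma one_div_add_one_rpow_three_halves_le {a : ℝ} (ha : 0 < a) :
    1 / (a + 1) ^ (3 / 2 : ℝ) ≤ 2 * (1 / √a - 1 / √(a + 1)) := by
  have hb : 0 < a + 1 := by linarith
  set s := √a
  set t := √(a + 1)
  have hs : 0 < s := sqrt_pos.mpr ha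
  have hst : s ≤ t := sqrt_le_sqrt (by linarith)
  have ht : 0 < t := hs.trans_le hst
  have ht2 : t ^ 2 = a + 1 := sq_sqrt hb.le
  have hdiff : (t - s) * (t + s) = 1 := by nlinarith [sq_sqrt ha.le]
  have hpow : (a + 1) ^ (3 / 2 : ℝ) = t ^ 3 := by
    rw [← ht2, ← rpow_natCast, ← rpow_mul (sqrt_nonneg _)]
    norm_num
    rfl
  have hsub : 1 / s - 1 / t = 1 / (s * t * (t + s)) := by
    field_simp
    linear_combination hdiff
  rw [hpow, hsub, mul_one_div, div_le_div_iff₀ (by positivity) (by positivity)]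
  nlinarith [mul_pos hs ht]

lemma tsum_one_div_add_rpow_three_halves_le {a : ℝ} (ha : 0 < a) :
    ∑' n : ℕ, 1 / ((n : ℝ) + a + 1) ^ (3 / 2 : ℝ) ≤ 2 / √a := by
  set g : ℕ → ℝ := fun n => 1 / √((n : ℝ) + a)
  have hterm (n : ℕ) : 1 / ((n : ℝ) + a + 1) ^ (3 / 2 : ℝ) ≤ 2 * (g n - g (n + 1)) := by
    simpa [g, add_right_comm] using
      one_div_add_one_rpow_three_halves_le (a := n + a) (by positivity)
  refine tsum_le_of_sum_range_le (fun n => by positivity) fun m => ?_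
  calc ∑ n ∈ Finset.range m, 1 / ((n : ℝ) + a + 1) ^ (3 / 2 : ℝ)
      ≤ ∑ n ∈ Finset.range m, 2 * (g n - g (n + 1)) := Finset.sum_le_sum fun n _ => hterm n
    _ = 2 * (g 0 - g m) := by rw [← Finset.mul_sum, Finset.sum_range_sub']
    _ ≤ 2 * g 0 := by linarith [show 0 ≤ g m by positivity]
    _ = 2 / √a := by simp [g, div_eq_mul_inv]

lemma log_sq_add_one_le (R : ℝ) : log (R ^ 2 + 1) ≤ 1 + 2 * max (log R) 0 := by
  have hlog2 : log 2 < 1 := by linarith [log_two_lt_d9]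
  rcases le_or_gt |R| 1 with hR | hR
  · have : R ^ 2 + 1 ≤ 2 := by nlinarith [sq_abs R, abs_nonneg R]
    linarith [log_le_log (by positivity) this, le_max_right (log R) 0]
  · have hR0 : R ≠ 0 := by rintro rfl; norm_num at hR
    have : R ^ 2 + 1 ≤ 2 * R ^ 2 := by nlinarith [sq_abs R]
    have h := log_le_log (by positivity) this
    rw [log_mul two_ne_zero (pow_ne_zero 2 hR0), log_pow] at h
    push_cast at h
    linarith [le_max_left (log R) 0]

section Decay

variable {d : ℕ → ℝ} {A B : ℝ}

lemma summable_abs_of_abs_le_div_rpow (hB : ∀ n, |d n| ≤ B / ((n : ℝ) + 1) ^ (3 / 2 : ℝ)) :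
    Summable fun n => |d n| :=
  .of_nonneg_of_le (fun n => abs_nonneg _) (fun n => (hB n).trans_eq (mul_one_div _ _).symm)
    ((summable_one_div_add_rpow zero_le_one (by norm_num)).mul_left B)

lemma abs_tsum_le_of_abs_le_div (hA : ∀ n, |d n| ≤ A / ((n : ℝ) + 1))
    (hB : ∀ n, |d n| ≤ B / ((n : ℝ) + 1) ^ (3 / 2 : ℝ)) {N : ℕ} (hN : 0 < N) :
    |∑' n, d n| ≤ A * (1 + log N) + 2 * B / √N := by
  have hA0 : 0 ≤ A := by simpa using (abs_nonneg _).trans (hA 0)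
  have hB0 : 0 ≤ B := by simpa using (abs_nonneg _).trans (hB 0)
  have head : ∑ n ∈ Finset.range N, |d n| ≤ A * (1 + log N) :=
    calc ∑ n ∈ Finset.range N, |d n| ≤ ∑ n ∈ Finset.range N, A / ((n : ℝ) + 1) :=
          Finset.sum_le_sum fun n _ => hA n
      _ = A * harmonic N := by simp [harmonic, Finset.mul_sum, div_eq_mul_inv]
      _ ≤ A * (1 + log N) := mul_le_mul_of_nonneg_left (harmonic_le_one_add_log N) hA0
  have tail : ∑' n, |d (n + N)| ≤ 2 * B / √N := by
    have hsum : Summable fun n : ℕ => 1 / ((n : ℝ) + (N + 1)) ^ (3 / 2 : ℝ) :=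
      summable_one_div_add_rpow (by positivity) (by norm_num)
    calc ∑' n, |d (n + N)| ≤ ∑' n : ℕ, B * (1 / ((n : ℝ) + N + 1) ^ (3 / 2 : ℝ)) := by
          refine Summable.tsum_le_tsum (fun n => ?_)
            ((summable_nat_add_iff N).mpr (summable_abs_of_abs_le_div_rpow hB)) ?_
          · exact (hB (n + N)).trans_eq (by push_cast; ring)
          · simpa [add_assoc] using hsum.mul_left B
      _ ≤ B * (2 / √N) := by
          rw [tsum_mul_left]
          exact mul_le_mul_of_nonneg_left
            (tsum_one_div_add_rpow_three_halves_le (by exact_mod_cast hN)) hB0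
      _ = 2 * B / √N := by ring
  calc |∑' n, d n| ≤ ∑' n, |d n| := by
        simpa only [Real.norm_eq_abs] using norm_tsum_le_tsum_norm (f := d)
          (by simpa only [Real.norm_eq_abs] using summable_abs_of_abs_le_div_rpow hB)
    _ = ∑ n ∈ Finset.range N, |d n| + ∑' n, |d (n + N)| :=
        ((summable_abs_of_abs_le_div_rpow hB).sum_add_tsum_nat_add N).symm
    _ ≤ A * (1 + log N) + 2 * B / √N := add_le_add head tail

lemma abs_tsum_le_mul_one_add_log {R : ℝ} (hR : 0 ≤ R)
    (hA : ∀ n, |d n| ≤ A / ((n : ℝ) + 1))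
    (hB : ∀ n, |d n| ≤ A * (R + 1) / ((n : ℝ) + 1) ^ (3 / 2 : ℝ)) :
    |∑' n, d n| ≤ 6 * A * (1 + max (log R) 0) := by
  have hA0 : 0 ≤ A := by simpa using (abs_nonneg _).trans (hA 0)
  set N := ⌊R ^ 2⌋₊ + 1
  have hRN : R + 1 ≤ 2 * √N := by
    have hR : R < √N := (lt_sqrt hR).mpr (by push_cast [N]; exact Nat.lt_floor_add_one _)
    have h1 : 1 ≤ √N := one_le_sqrt.mpr (by simp [N])
    linarith
  have hlogN : log N ≤ 1 + 2 * max (log R) 0 := by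
    refine (log_le_log (by positivity) ?_).trans (log_sq_add_one_le R)
    push_cast [N]
    linarith [Nat.floor_le (sq_nonneg R)]
  have htail : 2 * (A * (R + 1)) / √N ≤ 4 * A := by
    rw [div_le_iff₀ (by positivity)]
    nlinarith
  calc |∑' n, d n| ≤ A * (1 + log N) + 2 * (A * (R + 1)) / √N :=
        abs_tsum_le_of_abs_le_div hA hB (Nat.succ_pos _)
    _ ≤ 6 * A * (1 + max (log R) 0) := by
        nlinarith [mul_nonneg hA0 (le_max_right (log R) 0)]

end Decay

theorem stmt8_general {Ω : Type*} [MeasurableSpace Ω] (μ : Measure Ω)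
    (X : ℕ → Ω → ℤ × ℤ)
    (p : ℕ → ℤ × ℤ → ℝ) (hp : ∀ n x, p n x = (μ {ω | X n ω = x}).toReal)
    (C : ℝ)
    (hbound : ∀ n : ℕ, 1 ≤ n → ∀ x, p n x ≤ C / n)
    (hdiff : ∀ n : ℕ, 1 ≤ n → ∀ x y : ℤ × ℤ,
      |p n x - p n y| ≤ C * znorm (x - y) / (n : ℝ) ^ (3 / 2 : ℝ)) :
    (∀ x, Summable fun n : ℕ => |p (n + 1) x - p (n + 1) (1, 0)|) ∧
      ∃ c : ℝ, ∀ x,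
        |∑' n : ℕ, (p (n + 1) x - p (n + 1) (1, 0))| ≤
          c * (1 + max (Real.log (znorm x)) 0) := by
  have hp0 (n x) : 0 ≤ p n x := (hp n x).symm ▸ ENNReal.toReal_nonneg
  have hA (x) (n : ℕ) : |p (n + 1) x - p (n + 1) (1, 0)| ≤ C / ((n : ℝ) + 1) := by
    have h := hbound (n + 1) n.succ_pos
    push_cast at h
    exact abs_sub_le_of_nonneg_of_le (hp0 _ _) (h x) (hp0 _ _) (h _)
  have hC : 0 ≤ C := by simpa using (abs_nonneg _).trans (hA 0 0)
  have hB (x) (n : ℕ) : |p (n + 1) x - p (n + 1) (1, 0)| ≤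
      C * (znorm x + 1) / ((n : ℝ) + 1) ^ (3 / 2 : ℝ) := by
    have h := hdiff (n + 1) n.succ_pos x (1, 0)
    push_cast at h
    refine h.trans (div_le_div_of_nonneg_right (mul_le_mul_of_nonneg_left ?_ hC) (by positivity))
    simpa [znorm_one_zero] using znorm_sub_le x (1, 0)
  exact ⟨fun x => summable_abs_of_abs_le_div_rpow (hB x),
    6 * C, fun x => abs_tsum_le_mul_one_add_log (sqrt_nonneg _) (hA x) (hB x)⟩

theorem stmt8 {Ω : Type*} [MeasurableSpace Ω] (μ : Measure Ω) [IsProbabilityMeasure μ]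
    (ξ : ℕ → Ω → ℤ × ℤ) (hmeas : ∀ i, Measurable (ξ i))
    (hindep : iIndepFun ξ μ)
    (hident : ∀ i, Measure.map (ξ i) μ = Measure.map (ξ 0) μ)
    (X : ℕ → Ω → ℤ × ℤ) (hX : ∀ n ω, X n ω = ∑ i ∈ Finset.range n, ξ i ω)
    (p : ℕ → ℤ × ℤ → ℝ) (hp : ∀ n x, p n x = (μ {ω | X n ω = x}).toReal)
    (C : ℝ)
    (hbound : ∀ n : ℕ, 1 ≤ n → ∀ x, p n x ≤ C / n)
    (hdiff : ∀ n : ℕ, 1 ≤ n → ∀ x y : ℤ × ℤ,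
      |p n x - p n y| ≤ C * znorm (x - y) / (n : ℝ) ^ (3 / 2 : ℝ)) :
    (∀ x, Summable fun n : ℕ => |p (n + 1) x - p (n + 1) (1, 0)|) ∧
      ∃ c : ℝ, ∀ x,
        |∑' n : ℕ, (p (n + 1) x - p (n + 1) (1, 0))| ≤
          c * (1 + max (Real.log (znorm x)) 0) :=
  stmt8_general μ X p hp C hbound hdiff
end

section
/- Let $X_n$ be a random walk on $\mathbb{Z}^2$ whose transition probabilities satisfy $p(i,0,x)\le c/i$ for all $i\ge1$. Then for every $b\in(0,2)$ there is a constant $c_b$ such that $E[(1+|X_i|^2)^{-b/2}] \le c_b\, i^{-b/2}$ for all $i\ge1$. -/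
open MeasureTheory

/-!
Split the expectation according to whether `X i` lies in the box `[-N, N]²`, `N = ⌊√i⌋`.
Outside the box `|X i|² > i`, so the integrand is at most `i ^ (-b/2)`. Each point of the box has
mass at most `c / i`, and `∑_{x ∈ [-N, N]²} (1 + |x|²) ^ (-b/2) = O(N ^ (2 - b))`: since
`(1 + x₁²)(1 + x₂²) ≤ (1 + |x|²)²`, this sum is at most the square of
`∑_{|k| ≤ N} (1 + k²) ^ (-b/4)`, which is compared with `∫₀ᴺ x ^ (-b/2) dx`.
-/

open Finset Real

section LatticeSums

variable {s : ℝ}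

lemma sq_rpow_neg_half {x : ℝ} (hx : 0 ≤ x) : (x ^ 2) ^ (-(s / 2)) = x ^ (-s) := by
  rw [← rpow_natCast_mul hx]
  ring_nf

lemma sum_range_one_add_sq_rpow_le (hs0 : 0 ≤ s) (hs1 : s < 1) (N : ℕ) :
    ∑ m ∈ range (N + 1), (1 + (m : ℝ) ^ 2) ^ (-(s / 2)) ≤
      (1 + 1 / (1 - s)) * ((N : ℝ) + 1) ^ (1 - s) := by
  set f : ℝ → ℝ := fun x ↦ (1 + x ^ 2) ^ (-(s / 2))
  have hanti : AntitoneOn f (Set.Icc 0 (0 + N)) := fun x hx y _ hxy ↦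
    rpow_le_rpow_of_nonpos (by positivity) (by nlinarith [hx.1]) (by linarith)
  have hf_le : ∀ x ∈ Set.Ioo (0 : ℝ) N, f x ≤ x ^ (-s) := fun x hx ↦ by
    rw [← sq_rpow_neg_half hx.1.le]
    exact rpow_le_rpow_of_nonpos (pow_pos hx.1 2) (by linarith) (by linarith)
  have hcont : Continuous f :=
    (continuous_const.add (continuous_pow 2)).rpow_const fun x ↦
      .inl (by positivity : (1 : ℝ) + x ^ 2 ≠ 0)
  have htail : ∑ m ∈ range N, f (m + 1) ≤ (N : ℝ) ^ (1 - s) / (1 - s) :=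
    calc ∑ m ∈ range N, f (m + 1) ≤ ∫ x in (0 : ℝ)..N, f x := by
          simpa using hanti.sum_le_integral
      _ ≤ ∫ x in (0 : ℝ)..N, x ^ (-s) :=
          intervalIntegral.integral_mono_on_of_le_Ioo (Nat.cast_nonneg N)
            (hcont.intervalIntegrable _ _)
            (intervalIntegral.intervalIntegrable_rpow' (by linarith)) hf_le
      _ = (N : ℝ) ^ (1 - s) / (1 - s) := by
          rw [integral_rpow (.inl (by linarith)), neg_add_eq_sub,
            zero_rpow (by linarith), sub_zero]
  have hone : (1 : ℝ) ≤ ((N : ℝ) + 1) ^ (1 - s) := one_le_rpow (by linarith) (by linarith)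
  have hN : (N : ℝ) ^ (1 - s) ≤ ((N : ℝ) + 1) ^ (1 - s) :=
    rpow_le_rpow (by positivity) (by linarith) (by linarith)
  calc ∑ m ∈ range (N + 1), f m = ∑ m ∈ range N, f (m + 1) + 1 := by
        simp [sum_range_succ', f]
    _ ≤ (N : ℝ) ^ (1 - s) / (1 - s) + 1 := by linarith
    _ ≤ ((N : ℝ) + 1) ^ (1 - s) / (1 - s) + ((N : ℝ) + 1) ^ (1 - s) := by
        gcongr
    _ = (1 + 1 / (1 - s)) * ((N : ℝ) + 1) ^ (1 - s) := by ring

lemma sum_Icc_neg_le_two_mul_sum_range {h : ℤ → ℝ} (h0 : ∀ k, 0 ≤ h k)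
    (heven : ∀ k, h (-k) = h k) (N : ℕ) :
    ∑ k ∈ Icc (-N : ℤ) N, h k ≤ 2 * ∑ m ∈ range (N + 1), h m := by
  let t := (range (N + 1)).disjSum (range (N + 1))
  let e : ℕ ⊕ ℕ → ℤ := Sum.elim (fun m ↦ m) (fun m ↦ -m)
  have hsub : Icc (-N : ℤ) N ⊆ t.image e := by
    intro k hk
    rw [mem_Icc] at hk
    rcases le_or_gt 0 k with hk0 | hk0
    · exact mem_image.2 ⟨.inl k.toNat, by simp [t]; omega, by simp [e]; omega⟩
    · exact mem_image.2 ⟨.inr (-k).toNat, by simp [t]; omega, by simp [e]; omega⟩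
  calc ∑ k ∈ Icc (-N : ℤ) N, h k ≤ ∑ k ∈ t.image e, h k :=
        sum_le_sum_of_subset_of_nonneg hsub fun k _ _ ↦ h0 k
    _ ≤ ∑ u ∈ t, h (e u) := sum_image_le_of_nonneg fun k _ ↦ h0 k
    _ = 2 * ∑ m ∈ range (N + 1), h m := by simp [t, e, heven, two_mul]

lemma znorm_sq (x : ℤ × ℤ) : znorm x ^ 2 = (x.1 : ℝ) ^ 2 + (x.2 : ℝ) ^ 2 :=
  sq_sqrt (by positivity)

lemma sum_Icc_one_add_sq_rpow_le (hs0 : 0 ≤ s) (hs1 : s < 1) (N : ℕ) :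
    ∑ k ∈ Icc (-N : ℤ) N, (1 + (k : ℝ) ^ 2) ^ (-(s / 2)) ≤
      2 * (1 + 1 / (1 - s)) * ((N : ℝ) + 1) ^ (1 - s) := by
  calc _ ≤ 2 * ∑ m ∈ range (N + 1), (1 + ((m : ℤ) : ℝ) ^ 2) ^ (-(s / 2)) :=
        sum_Icc_neg_le_two_mul_sum_range (fun k ↦ by positivity) (fun k ↦ by simp) N
    _ ≤ _ := by
        rw [mul_assoc]
        gcongr
        exact_mod_cast sum_range_one_add_sq_rpow_le hs0 hs1 N

lemma one_add_znorm_sq_rpow_le (hs : 0 ≤ s) (x : ℤ × ℤ) :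
    (1 + znorm x ^ 2) ^ (-s) ≤
      (1 + (x.1 : ℝ) ^ 2) ^ (-(s / 2)) * (1 + (x.2 : ℝ) ^ 2) ^ (-(s / 2)) := by
  rw [← mul_rpow (by positivity) (by positivity), ← sq_rpow_neg_half (by positivity)]
  refine rpow_le_rpow_of_nonpos (by positivity) ?_ (by linarith)
  rw [znorm_sq]
  nlinarith [sq_nonneg ((x.1 : ℝ) * x.2), sq_nonneg ((x.1 : ℝ)), sq_nonneg ((x.2 : ℝ))]

noncomputable def latticeBox (N : ℕ) : Finset (ℤ × ℤ) := Icc (-N : ℤ) N ×ˢ Icc (-N : ℤ) N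

lemma sum_latticeBox_le (hs0 : 0 ≤ s) (hs1 : s < 1) (N : ℕ) :
    ∑ x ∈ latticeBox N, (1 + znorm x ^ 2) ^ (-s) ≤
      (2 * (1 + 1 / (1 - s)) * ((N : ℝ) + 1) ^ (1 - s)) ^ 2 := by
  calc ∑ x ∈ latticeBox N, (1 + znorm x ^ 2) ^ (-s)
      ≤ ∑ x ∈ latticeBox N,
          (1 + (x.1 : ℝ) ^ 2) ^ (-(s / 2)) * (1 + (x.2 : ℝ) ^ 2) ^ (-(s / 2)) :=
        sum_le_sum fun x _ ↦ one_add_znorm_sq_rpow_le (by linarith) x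
    _ = (∑ k ∈ Icc (-N : ℤ) N, (1 + (k : ℝ) ^ 2) ^ (-(s / 2))) ^ 2 := by
        rw [latticeBox, sum_product, sq, sum_mul_sum]
    _ ≤ _ := by
        gcongr
        exact sum_Icc_one_add_sq_rpow_le hs0 hs1 N

lemma lt_znorm_sq_of_notMem_latticeBox_sqrt {i : ℕ} {x : ℤ × ℤ} (hx : x ∉ latticeBox i.sqrt) :
    (i : ℝ) < znorm x ^ 2 := by
  have hi := Nat.lt_succ_sqrt' i
  simp only [latticeBox, mem_product, mem_Icc, not_and_or, not_le] at hx
  rw [znorm_sq]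
  have : (i : ℤ) < x.1 ^ 2 + x.2 ^ 2 := by
    rcases hx with (h | h) | (h | h) <;> nlinarith [sq_nonneg x.1, sq_nonneg x.2]
  exact_mod_cast this

lemma sum_latticeBox_sqrt_le (hs0 : 0 ≤ s) (hs1 : s < 1) {i : ℕ} (hi : 1 ≤ i) :
    ∑ x ∈ latticeBox i.sqrt, (1 + znorm x ^ 2) ^ (-s) ≤
      4 * (2 * (1 + 1 / (1 - s))) ^ 2 * (i : ℝ) ^ (1 - s) := by
  set N := i.sqrt
  have hN : ((N : ℝ) + 1) ^ 2 ≤ 4 * i := by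
    have h1 : 1 ≤ N := Nat.sqrt_pos.2 hi
    have h2 := Nat.sqrt_le' i
    have : (N + 1) ^ 2 ≤ 4 * i := by nlinarith
    exact_mod_cast this
  have h4 : (4 : ℝ) ^ (1 - s) ≤ 4 := rpow_le_self_of_one_le (by norm_num) (by linarith)
  calc _ ≤ (2 * (1 + 1 / (1 - s)) * ((N : ℝ) + 1) ^ (1 - s)) ^ 2 := sum_latticeBox_le hs0 hs1 N
    _ = (2 * (1 + 1 / (1 - s))) ^ 2 * (((N : ℝ) + 1) ^ 2) ^ (1 - s) := by
        rw [mul_pow, ← rpow_natCast_mul (by positivity), ← rpow_mul_natCast (by positivity)]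
        ring_nf
    _ ≤ (2 * (1 + 1 / (1 - s))) ^ 2 * (4 * (i : ℝ)) ^ (1 - s) := by
        gcongr
    _ ≤ _ := by
        rw [mul_rpow (by norm_num) (by positivity), ← mul_assoc, mul_comm 4]
        gcongr

end LatticeSums

lemma integral_comp_le_add_sum {Ω α : Type*} [MeasurableSpace Ω] [MeasurableSpace α]
    [MeasurableSingletonClass α] (μ : Measure Ω) [IsProbabilityMeasure μ] {Y : Ω → α}
    (hY : Measurable Y) {f : α → ℝ} (hf : ∀ x, 0 ≤ f x) (t : Finset α) {ε : ℝ} (hε : 0 ≤ ε)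
    (hft : ∀ x ∉ t, f x ≤ ε) :
    ∫ ω, f (Y ω) ∂μ ≤ ε + ∑ y ∈ t, μ.real {ω | Y ω = y} * f y := by
  have hfibre : ∀ y, MeasurableSet {ω | Y ω = y} := fun y ↦ hY (measurableSet_singleton y)
  have hint : ∀ y, Integrable ({ω | Y ω = y}.indicator fun _ ↦ f y) μ := fun y ↦
    (integrable_const (f y)).indicator (hfibre y)
  have hint_sum : Integrable (fun ω ↦ ∑ y ∈ t, {ω | Y ω = y}.indicator (fun _ ↦ f y) ω) μ :=
    integrable_finsetSum _ fun y _ ↦ hint y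
  have hpt : ∀ ω, f (Y ω) ≤ ε + ∑ y ∈ t, {ω | Y ω = y}.indicator (fun _ ↦ f y) ω := by
    intro ω
    classical
    simp only [Set.indicator_apply, Set.mem_ofPred_eq, sum_ite_eq]
    split_ifs with h
    · linarith
    · linarith [hft _ h]
  calc ∫ ω, f (Y ω) ∂μ ≤ ∫ ω, (ε + ∑ y ∈ t, {ω | Y ω = y}.indicator (fun _ ↦ f y) ω) ∂μ :=
        integral_mono_of_nonneg (.of_forall fun ω ↦ hf _)
          ((integrable_const ε).add hint_sum) (.of_forall hpt)
    _ = ε + ∑ y ∈ t, μ.real {ω | Y ω = y} * f y := by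
        rw [integral_add (integrable_const ε) hint_sum, integral_const,
          integral_finsetSum _ fun y _ ↦ hint y]
        simp [integral_indicator_const _ (hfibre _)]

theorem stmt12 {Ω : Type*} [MeasurableSpace Ω] (μ : Measure Ω) [IsProbabilityMeasure μ]
    (X : ℕ → Ω → ℤ × ℤ) (hmeas : ∀ i, Measurable (X i)) (c : ℝ)
    (hp : ∀ i : ℕ, 1 ≤ i → ∀ x : ℤ × ℤ, (μ {ω | X i ω = x}).toReal ≤ c / i)
    (b : ℝ) (hb0 : 0 < b) (hb2 : b < 2) :
    ∃ cb : ℝ, ∀ i : ℕ, 1 ≤ i →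
      ∫ ω, (1 + znorm (X i ω) ^ 2) ^ (-(b / 2)) ∂μ ≤ cb * (i : ℝ) ^ (-(b / 2)) := by
  set s := b / 2 with hs
  have hs0 : 0 ≤ s := by positivity
  have hs1 : s < 1 := by linarith
  set K := 4 * (2 * (1 + 1 / (1 - s))) ^ 2
  refine ⟨1 + c * K, fun i hi ↦ ?_⟩
  have hi0 : (0 : ℝ) < i := by exact_mod_cast hi
  have hci_nonneg : 0 ≤ c / i := ENNReal.toReal_nonneg.trans (hp i hi 0)
  have houtside : ∀ x ∉ latticeBox i.sqrt, (1 + znorm x ^ 2) ^ (-s) ≤ (i : ℝ) ^ (-s) :=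
    fun x hx ↦ rpow_le_rpow_of_nonpos hi0
      (by linarith [lt_znorm_sq_of_notMem_latticeBox_sqrt hx]) (by linarith)
  calc ∫ ω, (1 + znorm (X i ω) ^ 2) ^ (-s) ∂μ
      ≤ (i : ℝ) ^ (-s) +
          ∑ x ∈ latticeBox i.sqrt, μ.real {ω | X i ω = x} * (1 + znorm x ^ 2) ^ (-s) :=
        integral_comp_le_add_sum μ (hmeas i) (fun x ↦ by positivity) _ (by positivity) houtside
    _ ≤ (i : ℝ) ^ (-s) + c / i * ∑ x ∈ latticeBox i.sqrt, (1 + znorm x ^ 2) ^ (-s) := by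
        rw [mul_sum]
        gcongr with x
        exact hp i hi x
    _ ≤ (i : ℝ) ^ (-s) + c / i * (K * (i : ℝ) ^ (1 - s)) := by
        gcongr
        exact sum_latticeBox_sqrt_le hs0 hs1 hi
    _ = (1 + c * K) * (i : ℝ) ^ (-s) := by
        rw [sub_eq_neg_add, rpow_add_one hi0.ne']
        field_simp
end
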